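/- Let n be a positive integer and K ≥ 1 a real number. Let a^{jk} : ℝⁿ → ℝ (1 ≤ j,k ≤ n) be twice continuously differentiable with a^{jk} = a^{kj} and with |a^{jk}| and all its partial derivatives up to order 2 bounded by K; let β : ℝⁿ → ℝ be three times continuously differentiable with 0 ≤ β ≤ 1 and all its partial derivatives up to order 3 bounded by K. Fix real numbers m ≥ 1, λ ≥ 1, μ ≥ 1, γ > 0, and set ξ(x) = γ·e^{μ(6m+β(x))}, ℓ(x) = λγ·(e^{μ(6m+β(x))} − μe^{μ(6m+6)}) and A(x) = Σ_{j,k=1}^n [a^{jk}(x)·∂_jℓ(x)·∂_kℓ(x) − ∂_k(a^{jk}·∂_jℓ)(x)]. Then there exists a constant C depending only on n and K such that for every index k and every x, |∂_k A(x) − 2λ²μ³ξ(x)²·∂_kβ(x)·Ψ(x)| ≤ C·(λ²μ²ξ(x)² + λμ³ξ(x)), where Ψ(x) = Σ_{j,k=1}^n a^{jk}(x)·∂_jβ(x)·∂_kβ(x). -/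

import Mathlib

/-! With `w = λμξ` one has `∂ⱼℓ = w ∂ⱼβ` and `∂ⱼw = μ w ∂ⱼβ`, so that
`A = w (w Ψ - D - μ Ψ)` where `Ψ = Σ a^{jk} ∂ⱼβ ∂ₖβ` and `D = Σ ∂ₖ(a^{jk} ∂ⱼβ)`.
Differentiating once more, the only term of size `λ²μ³ξ²` is `2μ w² ∂ₖβ Ψ`; the rest,
`w² ∂ₖΨ - μ w ∂ₖβ (D + μΨ) - w (∂ₖD + μ ∂ₖΨ)`, is controlled by the Leibniz rule:
`Ψ, ∂ₖΨ = O(n²K³)` and `D, ∂ₖD = O(n²K²)`. -/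

noncomputable def pd {n : ℕ} (f : EuclideanSpace ℝ (Fin n) → ℝ) (j : Fin n)
    (x : EuclideanSpace ℝ (Fin n)) : ℝ :=
  fderiv ℝ f x (EuclideanSpace.single j 1)

/-- The Carleman weight exponent `ℓ(x) = λγ(e^{μ(6m+β(x))} - μe^{μ(6m+6)})` at frozen time. -/
noncomputable def ellFun {n : ℕ} (m lam mu γ : ℝ) (β : EuclideanSpace ℝ (Fin n) → ℝ)
    (x : EuclideanSpace ℝ (Fin n)) : ℝ :=
  lam * γ * (Real.exp (mu * (6 * m + β x)) - mu * Real.exp (mu * (6 * m + 6)))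

/-- The auxiliary function `A = Σ_{j,k} (a^{jk} ℓ_j ℓ_k - (a^{jk} ℓ_j)_k)`. -/
noncomputable def Afun {n : ℕ} (a : Fin n → Fin n → EuclideanSpace ℝ (Fin n) → ℝ)
    (ℓ : EuclideanSpace ℝ (Fin n) → ℝ) (x : EuclideanSpace ℝ (Fin n)) : ℝ :=
  ∑ j : Fin n, ∑ k : Fin n,
    (a j k x * pd ℓ j x * pd ℓ k x - pd (fun y => a j k y * pd ℓ j y) k x)

section PartialDerivative

variable {n : ℕ} {f g : EuclideanSpace ℝ (Fin n) → ℝ} {x : EuclideanSpace ℝ (Fin n)}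

lemma pd_const (c : ℝ) (j : Fin n) : pd (fun _ => c) j x = 0 := by
  simp [pd]

lemma pd_add (hf : DifferentiableAt ℝ f x) (hg : DifferentiableAt ℝ g x) (j : Fin n) :
    pd (fun y => f y + g y) j x = pd f j x + pd g j x := by
  simp [pd, fderiv_fun_add hf hg]

lemma pd_sub (hf : DifferentiableAt ℝ f x) (hg : DifferentiableAt ℝ g x) (j : Fin n) :
    pd (fun y => f y - g y) j x = pd f j x - pd g j x := by
  simp [pd, fderiv_fun_sub hf hg]

lemma pd_mul (hf : DifferentiableAt ℝ f x) (hg : DifferentiableAt ℝ g x) (j : Fin n) :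
    pd (fun y => f y * g y) j x = pd f j x * g x + f x * pd g j x := by
  simp only [pd, fderiv_fun_mul hf hg, add_apply, smul_apply, smul_eq_mul]
  ring

lemma pd_const_mul (hf : DifferentiableAt ℝ f x) (c : ℝ) (j : Fin n) :
    pd (fun y => c * f y) j x = c * pd f j x := by
  simp [pd, fderiv_const_mul hf c]

lemma pd_exp (hf : DifferentiableAt ℝ f x) (j : Fin n) :
    pd (fun y => Real.exp (f y)) j x = Real.exp (f x) * pd f j x := by
  simp [pd, fderiv_exp hf]

lemma pd_sum {ι : Type*} (s : Finset ι) {F : ι → EuclideanSpace ℝ (Fin n) → ℝ}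
    (hF : ∀ i ∈ s, DifferentiableAt ℝ (F i) x) (j : Fin n) :
    pd (fun y => ∑ i ∈ s, F i y) j x = ∑ i ∈ s, pd (F i) j x := by
  simp [pd, fderiv_fun_sum hF]

lemma pd_sum_sum {F : Fin n → Fin n → EuclideanSpace ℝ (Fin n) → ℝ}
    (hF : ∀ j k, DifferentiableAt ℝ (F j k) x) (l : Fin n) :
    pd (fun y => ∑ j, ∑ k, F j k y) l x = ∑ j, ∑ k, pd (F j k) l x := by
  rw [pd_sum _ fun j _ => DifferentiableAt.fun_sum fun k _ => hF j k]
  exact Finset.sum_congr rfl fun j _ => pd_sum _ (fun k _ => hF j k) l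

lemma ContDiff.pd {k m : WithTop ℕ∞} (hf : ContDiff ℝ k f) (hmk : m + 1 ≤ k) (j : Fin n) :
    ContDiff ℝ m (_root_.pd f j) :=
  (hf.fderiv_right hmk).clm_apply contDiff_const

lemma abs_pd_mul_le (hf : DifferentiableAt ℝ f x) (hg : DifferentiableAt ℝ g x) {j : Fin n}
    {A A' B B' : ℝ} (hf₀ : |f x| ≤ A) (hf₁ : |pd f j x| ≤ A') (hg₀ : |g x| ≤ B)
    (hg₁ : |pd g j x| ≤ B') :
    |pd (fun y => f y * g y) j x| ≤ A' * B + A * B' := by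
  rw [pd_mul hf hg]
  refine (abs_add_le _ _).trans (add_le_add ?_ ?_) <;> rw [abs_mul]
  · exact mul_le_mul hf₁ hg₀ (abs_nonneg _) ((abs_nonneg _).trans hf₁)
  · exact mul_le_mul hf₀ hg₁ (abs_nonneg _) ((abs_nonneg _).trans hf₀)

end PartialDerivative

noncomputable def xiFun {n : ℕ} (m mu γ : ℝ) (β : EuclideanSpace ℝ (Fin n) → ℝ)
    (x : EuclideanSpace ℝ (Fin n)) : ℝ :=
  γ * Real.exp (mu * (6 * m + β x))

noncomputable def psiFun {n : ℕ} (a : Fin n → Fin n → EuclideanSpace ℝ (Fin n) → ℝ)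
    (β : EuclideanSpace ℝ (Fin n) → ℝ) (x : EuclideanSpace ℝ (Fin n)) : ℝ :=
  ∑ j : Fin n, ∑ k : Fin n, a j k x * pd β j x * pd β k x

noncomputable def divFun {n : ℕ} (a : Fin n → Fin n → EuclideanSpace ℝ (Fin n) → ℝ)
    (β : EuclideanSpace ℝ (Fin n) → ℝ) (x : EuclideanSpace ℝ (Fin n)) : ℝ :=
  ∑ j : Fin n, ∑ k : Fin n, pd (fun y => a j k y * pd β j y) k x

section Weight

variable {n : ℕ} {β : EuclideanSpace ℝ (Fin n) → ℝ} (m lam mu γ : ℝ)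

lemma differentiable_xiFun (hβ : Differentiable ℝ β) : Differentiable ℝ (xiFun m mu γ β) :=
  ((hβ.const_add _).const_mul mu).exp.const_mul γ

lemma pd_xiFun (hβ : Differentiable ℝ β) (j : Fin n) (x : EuclideanSpace ℝ (Fin n)) :
    pd (xiFun m mu γ β) j x = mu * xiFun m mu γ β x * pd β j x := by
  have hinner : DifferentiableAt ℝ (fun y => mu * (6 * m + β y)) x :=
    ((hβ x).const_add _).const_mul mu
  rw [show xiFun m mu γ β = fun y => γ * Real.exp (mu * (6 * m + β y)) from rfl,
    pd_const_mul hinner.exp, pd_exp hinner, pd_const_mul ((hβ x).const_add _),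
    pd_add (differentiableAt_const _) (hβ x), pd_const]
  ring

lemma pd_ellFun (hβ : Differentiable ℝ β) (j : Fin n) :
    pd (ellFun m lam mu γ β) j = fun x => lam * mu * xiFun m mu γ β x * pd β j x := by
  funext x
  have hell : ellFun m lam mu γ β =
      fun y => lam * (xiFun m mu γ β y - γ * mu * Real.exp (mu * (6 * m + 6))) := by
    funext y; rw [ellFun, xiFun]; ring
  have hξ := differentiable_xiFun m mu γ hβ x
  rw [hell, pd_const_mul (hξ.sub_const _), pd_sub hξ (differentiableAt_const _), pd_const,
    pd_xiFun m mu γ hβ]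
  ring

end Weight

lemma abs_mul_le_mul {α : Type*} [Ring α] [LinearOrder α] [IsStrictOrderedRing α]
    {p q A B : α} (hp : |p| ≤ A) (hq : |q| ≤ B) : |p * q| ≤ A * B := by
  rw [abs_mul]
  exact mul_le_mul hp hq (abs_nonneg _) ((abs_nonneg _).trans hp)

lemma abs_sub_sub_le {α : Type*} [AddCommGroup α] [LinearOrder α] [IsOrderedAddMonoid α]
    (a b c : α) : |a - b - c| ≤ |a| + |b| + |c| :=
  (abs_sub _ _).trans (add_le_add_left (abs_sub a b) _)

lemma abs_sum_sum_le {n : ℕ} {u : Fin n → Fin n → ℝ} {c : ℝ} (h : ∀ j k, |u j k| ≤ c) :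
    |∑ j, ∑ k, u j k| ≤ n ^ 2 * c :=
  calc |∑ j, ∑ k, u j k| ≤ ∑ j, ∑ k, |u j k| :=
        (Finset.abs_sum_le_sum_abs _ _).trans
          (Finset.sum_le_sum fun j _ => Finset.abs_sum_le_sum_abs _ _)
    _ ≤ ∑ _j : Fin n, ∑ _k : Fin n, c :=
        Finset.sum_le_sum fun j _ => Finset.sum_le_sum fun k _ => h j k
    _ = n ^ 2 * c := by
        simp only [Finset.sum_const, Finset.card_univ, Fintype.card_fin, nsmul_eq_mul]; ring

section Coefficients

variable {n : ℕ} {a : Fin n → Fin n → EuclideanSpace ℝ (Fin n) → ℝ}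
  {β : EuclideanSpace ℝ (Fin n) → ℝ} {r : WithTop ℕ∞}

lemma contDiff_psiFun (ha : ∀ j k, ContDiff ℝ r (a j k)) (hβ : ContDiff ℝ (r + 1) β) :
    ContDiff ℝ r (psiFun a β) :=
  ContDiff.sum fun j _ => ContDiff.sum fun k _ =>
    ((ha j k).mul (hβ.pd le_rfl j)).mul (hβ.pd le_rfl k)

lemma contDiff_divFun (ha : ∀ j k, ContDiff ℝ (r + 1) (a j k))
    (hβ : ContDiff ℝ (r + 1 + 1) β) : ContDiff ℝ r (divFun a β) :=
  ContDiff.sum fun j _ => ContDiff.sum fun k _ =>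
    ((ha j k).mul (hβ.pd le_rfl j)).pd le_rfl k

end Coefficients

section Expansion

variable {n : ℕ} {a : Fin n → Fin n → EuclideanSpace ℝ (Fin n) → ℝ}
  {β ℓ w : EuclideanSpace ℝ (Fin n) → ℝ} {mu : ℝ}

lemma Afun_eq_of_pd_eq_mul (ha : ∀ j k, Differentiable ℝ (a j k))
    (hβ : ∀ j, Differentiable ℝ (pd β j)) (hw : Differentiable ℝ w)
    (hℓ : ∀ j, pd ℓ j = fun y => w y * pd β j y)
    (hpdw : ∀ k y, pd w k y = mu * w y * pd β k y) :
    Afun a ℓ = fun y => w y * (w y * psiFun a β y - divFun a β y - mu * psiFun a β y) := by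
  funext y
  simp only [Afun, psiFun, divFun, hℓ, Finset.mul_sum, ← Finset.sum_sub_distrib]
  refine Finset.sum_congr rfl fun j _ => Finset.sum_congr rfl fun k _ => ?_
  have hswap : (fun z => a j k z * (w z * pd β j z)) = fun z => w z * (a j k z * pd β j z) := by
    funext z; ring
  have hajβ : DifferentiableAt ℝ (fun z => a j k z * pd β j z) y := (ha j k y).mul (hβ j y)
  rw [hswap, pd_mul (hw y) hajβ, hpdw]
  ring

lemma pd_Afun_sub_of_pd_eq_mul (ha : ∀ j k, Differentiable ℝ (a j k))
    (hβ : ∀ j, Differentiable ℝ (pd β j)) (hw : Differentiable ℝ w)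
    (hψ : Differentiable ℝ (psiFun a β)) (hdiv : Differentiable ℝ (divFun a β))
    (hℓ : ∀ j, pd ℓ j = fun y => w y * pd β j y)
    (hpdw : ∀ k y, pd w k y = mu * w y * pd β k y) (k : Fin n) (x : EuclideanSpace ℝ (Fin n)) :
    pd (Afun a ℓ) k x - 2 * mu * w x ^ 2 * pd β k x * psiFun a β x =
      w x ^ 2 * pd (psiFun a β) k x - mu * w x * pd β k x * (divFun a β x + mu * psiFun a β x)
        - w x * (pd (divFun a β) k x + mu * pd (psiFun a β) k x) := by
  have hwψ : DifferentiableAt ℝ (fun y => w y * psiFun a β y) x := (hw x).mul (hψ x)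
  have hwψD : DifferentiableAt ℝ (fun y => w y * psiFun a β y - divFun a β y) x :=
    hwψ.sub (hdiv x)
  have hbracket : DifferentiableAt ℝ
      (fun y => w y * psiFun a β y - divFun a β y - mu * psiFun a β y) x :=
    hwψD.sub ((hψ x).const_mul mu)
  rw [Afun_eq_of_pd_eq_mul ha hβ hw hℓ hpdw, pd_mul (hw x) hbracket,
    pd_sub hwψD ((hψ x).const_mul mu), pd_sub hwψ (hdiv x), pd_mul (hw x) (hψ x),
    pd_const_mul (hψ x), hpdw]
  ring

lemma pd_Afun_ellFun_sub {m lam γ : ℝ} (ha : ∀ j k, ContDiff ℝ 2 (a j k))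
    (hβ : ContDiff ℝ 3 β) (k : Fin n) (x : EuclideanSpace ℝ (Fin n)) :
    pd (Afun a (ellFun m lam mu γ β)) k x
        - 2 * lam ^ 2 * mu ^ 3 * xiFun m mu γ β x ^ 2 * pd β k x * psiFun a β x =
      (lam * mu * xiFun m mu γ β x) ^ 2 * pd (psiFun a β) k x
        - mu * (lam * mu * xiFun m mu γ β x) * pd β k x * (divFun a β x + mu * psiFun a β x)
        - (lam * mu * xiFun m mu γ β x) * (pd (divFun a β) k x + mu * pd (psiFun a β) k x) := by
  have hβd : Differentiable ℝ β := hβ.differentiable (by norm_num)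
  have hξ := differentiable_xiFun m mu γ hβd
  rw [show 2 * lam ^ 2 * mu ^ 3 * xiFun m mu γ β x ^ 2 =
    2 * mu * (lam * mu * xiFun m mu γ β x) ^ 2 by ring]
  exact pd_Afun_sub_of_pd_eq_mul (w := fun y => lam * mu * xiFun m mu γ β y)
    (fun j k => (ha j k).differentiable two_ne_zero)
    (fun j => (hβ.pd (by norm_num) j).differentiable two_ne_zero) (hξ.const_mul _)
    ((contDiff_psiFun (r := 1) (fun j k => (ha j k).of_le (by norm_num))
      (hβ.of_le (by norm_num))).differentiable one_ne_zero)
    ((contDiff_divFun (r := 1) ha hβ).differentiable one_ne_zero)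
    (pd_ellFun m lam mu γ hβd)
    (fun k y => by rw [pd_const_mul (hξ y), pd_xiFun m mu γ hβd]; ring) k x

end Expansion

section Bounds

variable {n : ℕ} {a : Fin n → Fin n → EuclideanSpace ℝ (Fin n) → ℝ}
  {β : EuclideanSpace ℝ (Fin n) → ℝ} {x : EuclideanSpace ℝ (Fin n)} {K : ℝ}

lemma abs_psiFun_le (ha₀ : ∀ j k, |a j k x| ≤ K) (hβ₁ : ∀ j, |pd β j x| ≤ K) :
    |psiFun a β x| ≤ n ^ 2 * K ^ 3 :=
  abs_sum_sum_le fun j k =>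
    (abs_mul_le_mul (abs_mul_le_mul (ha₀ j k) (hβ₁ j)) (hβ₁ k)).trans_eq (by ring)

lemma abs_divFun_le (ha : ∀ j k, ContDiff ℝ 1 (a j k)) (hβ : ContDiff ℝ 2 β)
    (ha₀ : ∀ j k, |a j k x| ≤ K) (ha₁ : ∀ j k l, |pd (a j k) l x| ≤ K)
    (hβ₁ : ∀ j, |pd β j x| ≤ K) (hβ₂ : ∀ j k, |pd (pd β j) k x| ≤ K) :
    |divFun a β x| ≤ n ^ 2 * (2 * K ^ 2) :=
  abs_sum_sum_le fun j k =>
    (abs_pd_mul_le ((ha j k).differentiable one_ne_zero x)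
      ((hβ.pd le_rfl j).differentiable one_ne_zero x)
      (ha₀ j k) (ha₁ j k k) (hβ₁ j) (hβ₂ j k)).trans_eq (by ring)

lemma abs_pd_psiFun_le (ha : ∀ j k, ContDiff ℝ 1 (a j k)) (hβ : ContDiff ℝ 2 β)
    (ha₀ : ∀ j k, |a j k x| ≤ K) (ha₁ : ∀ j k l, |pd (a j k) l x| ≤ K)
    (hβ₁ : ∀ j, |pd β j x| ≤ K) (hβ₂ : ∀ j k, |pd (pd β j) k x| ≤ K) (l : Fin n) :
    |pd (psiFun a β) l x| ≤ n ^ 2 * (3 * K ^ 3) := by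
  have hda : ∀ j k, DifferentiableAt ℝ (a j k) x :=
    fun j k => (ha j k).differentiable one_ne_zero x
  have hdβ : ∀ j, DifferentiableAt ℝ (pd β j) x :=
    fun j => (hβ.pd le_rfl j).differentiable one_ne_zero x
  have hdaβ : ∀ j k, DifferentiableAt ℝ (fun y => a j k y * pd β j y) x :=
    fun j k => (hda j k).mul (hdβ j)
  rw [show psiFun a β = fun y => ∑ j, ∑ k, a j k y * pd β j y * pd β k y from rfl,
    pd_sum_sum (F := fun j k y => a j k y * pd β j y * pd β k y)
      fun j k => (hdaβ j k).mul (hdβ k)]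
  exact abs_sum_sum_le fun j k =>
    (abs_pd_mul_le (hdaβ j k) (hdβ k) (abs_mul_le_mul (ha₀ j k) (hβ₁ j))
      (abs_pd_mul_le (hda j k) (hdβ j) (ha₀ j k) (ha₁ j k l) (hβ₁ j) (hβ₂ j l))
      (hβ₁ k) (hβ₂ k l)).trans_eq (by ring)

lemma abs_pd_divFun_le (ha : ∀ j k, ContDiff ℝ 2 (a j k)) (hβ : ContDiff ℝ 3 β)
    (ha₀ : ∀ j k, |a j k x| ≤ K) (ha₁ : ∀ j k l, |pd (a j k) l x| ≤ K)
    (ha₂ : ∀ j k l l', |pd (pd (a j k) l) l' x| ≤ K)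
    (hβ₁ : ∀ j, |pd β j x| ≤ K) (hβ₂ : ∀ j k, |pd (pd β j) k x| ≤ K)
    (hβ₃ : ∀ j k l, |pd (pd (pd β j) k) l x| ≤ K) (l : Fin n) :
    |pd (divFun a β) l x| ≤ n ^ 2 * (4 * K ^ 2) := by
  have hβ' : ∀ j, ContDiff ℝ 2 (pd β j) := fun j => hβ.pd (by norm_num) j
  have hda : ∀ j k l, DifferentiableAt ℝ (pd (a j k) l) x :=
    fun j k l => ((ha j k).pd (by norm_num) l).differentiable one_ne_zero x
  have hdβ : ∀ j k, DifferentiableAt ℝ (pd (pd β j) k) x :=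
    fun j k => ((hβ' j).pd (by norm_num) k).differentiable one_ne_zero x
  have hleibniz : ∀ j k, pd (fun y => a j k y * pd β j y) k =
      fun y => pd (a j k) k y * pd β j y + a j k y * pd (pd β j) k y := fun j k => by
    funext y
    exact pd_mul ((ha j k).differentiable two_ne_zero y) ((hβ' j).differentiable two_ne_zero y) k
  rw [show divFun a β = fun y => ∑ j, ∑ k, pd (fun y => a j k y * pd β j y) k y from rfl,
    pd_sum_sum (F := fun j k => pd (fun y => a j k y * pd β j y) k)
      fun j k => (((ha j k).mul (hβ' j)).pd (by norm_num) k).differentiable one_ne_zero x]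
  refine abs_sum_sum_le fun j k => ?_
  have hda₀ := (ha j k).differentiable two_ne_zero x
  have hdβ₁ := (hβ' j).differentiable two_ne_zero x
  have h₁ : DifferentiableAt ℝ (fun y => pd (a j k) k y * pd β j y) x := (hda j k k).mul hdβ₁
  have h₂ : DifferentiableAt ℝ (fun y => a j k y * pd (pd β j) k y) x := hda₀.mul (hdβ j k)
  rw [hleibniz, pd_add h₁ h₂]
  exact (abs_add_le _ _).trans <| (add_le_add
    (abs_pd_mul_le (hda j k k) hdβ₁ (ha₁ j k k) (ha₂ j k k l) (hβ₁ j) (hβ₂ j l))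
    (abs_pd_mul_le hda₀ (hdβ j k) (ha₀ j k) (ha₁ j k l) (hβ₂ j k) (hβ₃ j k l))).trans_eq
    (by ring)

end Bounds

lemma abs_residual_le {lam mu ξ K N b ψ ψ' D D' : ℝ} (hlam : 0 ≤ lam) (hmu : 1 ≤ mu)
    (hξ : 0 ≤ ξ) (hK : 1 ≤ K) (hb : |b| ≤ K) (hψ : |ψ| ≤ N * K ^ 3)
    (hψ' : |ψ'| ≤ N * (3 * K ^ 3)) (hD : |D| ≤ N * (2 * K ^ 2)) (hD' : |D'| ≤ N * (4 * K ^ 2)) :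
    |(lam * mu * ξ) ^ 2 * ψ' - mu * (lam * mu * ξ) * b * (D + mu * ψ)
        - (lam * mu * ξ) * (D' + mu * ψ')|
      ≤ 10 * N * K ^ 4 * (lam ^ 2 * mu ^ 2 * ξ ^ 2 + lam * mu ^ 3 * ξ) := by
  have hmu₀ : 0 ≤ mu := zero_le_one.trans hmu
  have hK₀ : 0 ≤ K := zero_le_one.trans hK
  have hN : 0 ≤ N := nonneg_of_mul_nonneg_left ((abs_nonneg _).trans hψ) (by positivity)
  have hK₂₃ : K ^ 2 ≤ mu * K ^ 3 :=
    (pow_le_pow_right₀ hK (by norm_num)).trans (le_mul_of_one_le_left (by positivity) hmu)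
  have hmuψ : ∀ {p c : ℝ}, |p| ≤ c → |mu * p| ≤ mu * c := fun hp => by
    rw [abs_mul, abs_of_nonneg hmu₀]; exact mul_le_mul_of_nonneg_left hp hmu₀
  have hfirst : |D + mu * ψ| ≤ N * (3 * mu * K ^ 3) := by
    linarith [abs_add_le D (mu * ψ), hmuψ hψ, mul_le_mul_of_nonneg_left hK₂₃ hN]
  have hsecond : |D' + mu * ψ'| ≤ N * (7 * mu * K ^ 3) := by
    linarith [abs_add_le D' (mu * ψ'), hmuψ hψ', mul_le_mul_of_nonneg_left hK₂₃ hN]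
  have t₁ : |(lam * mu * ξ) ^ 2 * ψ'| ≤ 3 * N * K ^ 4 * (lam ^ 2 * mu ^ 2 * ξ ^ 2) := by
    rw [abs_mul, abs_of_nonneg (by positivity)]
    calc (lam * mu * ξ) ^ 2 * |ψ'| ≤ (lam * mu * ξ) ^ 2 * (N * (3 * K ^ 3)) := by gcongr
      _ ≤ (lam * mu * ξ) ^ 2 * (N * (3 * K ^ 4)) := by gcongr; norm_num
      _ = 3 * N * K ^ 4 * (lam ^ 2 * mu ^ 2 * ξ ^ 2) := by ring
  have t₂ : |mu * (lam * mu * ξ) * b * (D + mu * ψ)| ≤ 3 * N * K ^ 4 * (lam * mu ^ 3 * ξ) := by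
    rw [abs_mul, abs_mul, abs_of_nonneg (by positivity : 0 ≤ mu * (lam * mu * ξ))]
    calc mu * (lam * mu * ξ) * |b| * |D + mu * ψ|
        ≤ mu * (lam * mu * ξ) * K * (N * (3 * mu * K ^ 3)) := by gcongr
      _ = 3 * N * K ^ 4 * (lam * mu ^ 3 * ξ) := by ring
  have t₃ : |(lam * mu * ξ) * (D' + mu * ψ')| ≤ 7 * N * K ^ 4 * (lam * mu ^ 3 * ξ) := by
    rw [abs_mul, abs_of_nonneg (by positivity)]
    calc lam * mu * ξ * |D' + mu * ψ'| ≤ lam * mu * ξ * (N * (7 * mu * K ^ 3)) := by gcongr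
      _ = 7 * N * lam * ξ * (mu ^ 2 * K ^ 3) := by ring
      _ ≤ 7 * N * lam * ξ * (mu ^ 3 * K ^ 4) := by gcongr <;> norm_num
      _ = 7 * N * K ^ 4 * (lam * mu ^ 3 * ξ) := by ring
  have hX : 0 ≤ N * K ^ 4 * (lam ^ 2 * mu ^ 2 * ξ ^ 2) := by positivity
  exact (abs_sub_sub_le _ _ _).trans (by linarith)

/-- The expansion `A_k = 2λ²μ³ξ²β_kΨ + O(λ²)μ²ξ² + O(λ)μ³ξ` of the gradient of the
auxiliary function in the Carleman identity, with a constant depending only on `n`, `K`. -/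
theorem stmt8 (n : ℕ) (hn : 0 < n) (K : ℝ) (hK : 1 ≤ K) :
    ∃ C : ℝ, 0 < C ∧
      ∀ (a : Fin n → Fin n → EuclideanSpace ℝ (Fin n) → ℝ)
        (β : EuclideanSpace ℝ (Fin n) → ℝ) (m lam mu γ : ℝ),
        (∀ j k, ContDiff ℝ 2 (a j k)) →
        (∀ j k, a j k = a k j) →
        (∀ j k x, |a j k x| ≤ K) →
        (∀ j k l x, |pd (a j k) l x| ≤ K) →
        (∀ j k l l' x, |pd (pd (a j k) l) l' x| ≤ K) →
        ContDiff ℝ 3 β →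
        (∀ x, 0 ≤ β x ∧ β x ≤ 1) →
        (∀ j x, |pd β j x| ≤ K) →
        (∀ j k x, |pd (pd β j) k x| ≤ K) →
        (∀ j k l x, |pd (pd (pd β j) k) l x| ≤ K) →
        1 ≤ m → 1 ≤ lam → 1 ≤ mu → 0 < γ →
        ∀ (k : Fin n) (x : EuclideanSpace ℝ (Fin n)),
          |pd (Afun a (ellFun m lam mu γ β)) k x -
              2 * lam ^ 2 * mu ^ 3 * (γ * Real.exp (mu * (6 * m + β x))) ^ 2 *
                pd β k x *
                (∑ j : Fin n, ∑ k' : Fin n, a j k' x * pd β j x * pd β k' x)|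
            ≤ C * (lam ^ 2 * mu ^ 2 * (γ * Real.exp (mu * (6 * m + β x))) ^ 2 +
                lam * mu ^ 3 * (γ * Real.exp (mu * (6 * m + β x)))) := by
  refine ⟨10 * n ^ 2 * K ^ 4, by positivity, ?_⟩
  intro a β m lam mu γ ha _ ha₀ ha₁ ha₂ hβ _ hβ₁ hβ₂ hβ₃ _ hlam hmu hγ k x
  have hC1 : ∀ j k, ContDiff ℝ 1 (a j k) := fun j k => (ha j k).of_le (by norm_num)
  have hC2 : ContDiff ℝ 2 β := hβ.of_le (by norm_num)
  change |pd (Afun a (ellFun m lam mu γ β)) k x -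
      2 * lam ^ 2 * mu ^ 3 * xiFun m mu γ β x ^ 2 * pd β k x * psiFun a β x|
    ≤ 10 * n ^ 2 * K ^ 4 *
      (lam ^ 2 * mu ^ 2 * xiFun m mu γ β x ^ 2 + lam * mu ^ 3 * xiFun m mu γ β x)
  rw [pd_Afun_ellFun_sub ha hβ k x]
  exact abs_residual_le (by linarith) hmu (mul_pos hγ (Real.exp_pos _)).le hK (hβ₁ k x)
    (abs_psiFun_le (ha₀ · · x) (hβ₁ · x))
    (abs_pd_psiFun_le hC1 hC2 (ha₀ · · x) (ha₁ · · · x) (hβ₁ · x) (hβ₂ · · x) k)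
    (abs_divFun_le hC1 hC2 (ha₀ · · x) (ha₁ · · · x) (hβ₁ · x) (hβ₂ · · x))
    (abs_pd_divFun_le ha hβ (ha₀ · · x) (ha₁ · · · x) (ha₂ · · · · x) (hβ₁ · x) (hβ₂ · · x)
      (hβ₃ · · · x) k)
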